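/- Let M be a right R-module with endomorphism ring E = End(M), let M = M₁ ⊕ M₂ with canonical projection π₂ : M → M₂ (kernel M₁), and let e ∈ E be the idempotent with image M₁ and kernel M₂. For s ∈ E, the composite π₂ ∘ s : M → M₂ is a split epimorphism if and only if eE + sE = E. -/

import Mathlib

/-!
Write `ι : M₂ → M` for the inclusion, so that `π₂ ∘ ι = 1` and `ι ∘ π₂ = 1 - e`; in particular
`π₂ ∘ e = 0`. If `π₂ s g = 1`, then `v = g π₂`, `u = 1 - s v` satisfy
`e u + s v = e + (1 - e) s g π₂ = e + ι π₂ s g π₂ = e + ι π₂ = 1`. Conversely, if `e u + s v = 1`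
then `g = v ι` works: `π₂ s v ι = π₂ (1 - e u) ι = π₂ ι = 1`.
-/

open Submodule LinearMap Function

namespace LinearMap

variable {S M N : Type*} [Ring S] [AddCommGroup M] [Module S M] [AddCommGroup N] [Module S N]
  {π : M →ₗ[S] N} {ι : N →ₗ[S] M} {e : Module.End S M}

theorem comp_eq_zero_of_comp_eq_id_of_comp_eq_one_sub (hπι : π ∘ₗ ι = id)
    (hιπ : ι ∘ₗ π = 1 - e) : π ∘ₗ e = 0 := by
  have h : π ∘ₗ (ι ∘ₗ π) = π := by rw [← comp_assoc, hπι, id_comp]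
  rwa [hιπ, comp_sub, Module.End.one_eq_id, comp_id, sub_eq_self] at h

theorem exists_comp_comp_eq_id_iff_of_retraction (hπι : π ∘ₗ ι = id) (hιπ : ι ∘ₗ π = 1 - e)
    (s : Module.End S M) :
    (∃ g : N →ₗ[S] M, (π ∘ₗ s) ∘ₗ g = id) ↔ ∃ u v : Module.End S M, e * u + s * v = 1 := by
  have hπe := comp_eq_zero_of_comp_eq_id_of_comp_eq_one_sub hπι hιπ
  constructor
  · rintro ⟨g, hg⟩
    refine ⟨1 - s * (g ∘ₗ π), g ∘ₗ π, ?_⟩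
    calc e * (1 - s * (g ∘ₗ π)) + s * (g ∘ₗ π) = e + (1 - e) * s * (g ∘ₗ π) := by noncomm_ring
      _ = e + ι ∘ₗ ((π ∘ₗ s) ∘ₗ g) ∘ₗ π := by rw [← hιπ]; rfl
      _ = 1 := by rw [hg, id_comp, hιπ, add_sub_cancel]
  · rintro ⟨u, v, huv⟩
    refine ⟨v ∘ₗ ι, ?_⟩
    calc (π ∘ₗ s) ∘ₗ v ∘ₗ ι = π ∘ₗ (s * v) ∘ₗ ι := rfl
      _ = π ∘ₗ ι - (π ∘ₗ e) ∘ₗ u ∘ₗ ι := by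
        rw [eq_sub_of_add_eq' huv, sub_comp, comp_sub, Module.End.one_eq_id, id_comp]; rfl
      _ = id := by rw [hπe, zero_comp, sub_zero, hπι]

end LinearMap

theorem stmt_16 {R : Type*} [Ring R]
    {M : Type*} [AddCommGroup M] [Module Rᵐᵒᵖ M]
    (e : Module.End Rᵐᵒᵖ M)
    (π₂ : M →ₗ[Rᵐᵒᵖ] ↥(LinearMap.ker e))
    (hπ₂ : ∀ m : M, (π₂ m : M) = m - e m)
    (s : Module.End Rᵐᵒᵖ M) :
    (∃ g : ↥(LinearMap.ker e) →ₗ[Rᵐᵒᵖ] M,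
        (π₂ ∘ₗ (s : M →ₗ[Rᵐᵒᵖ] M)) ∘ₗ g = LinearMap.id) ↔
      ∃ u v : Module.End Rᵐᵒᵖ M, e * u + s * v = 1 := by
  refine exists_comp_comp_eq_id_iff_of_retraction (ι := (ker e).subtype) ?_ ?_ s
  · ext x
    simp [hπ₂, mem_ker.mp x.2]
  · ext m
    simp [hπ₂]
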